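/- Given reals p > 0, q, a, a′ and b > 0, b′ > 0, define h(ξ) = (−q + (ξ/2)·a′ + (1/(2ξ))·a) / (p + (ξ/2)·b′ + (1/(2ξ))·b) for ξ > 0, and set γ = p·a + q·b, γ′ = p·a′ + q·b′. If it is NOT the case that (γ < 0 and γ′ < 0), then sup_{ξ > 0} h(ξ) = max(a/b, a′/b′), where a/b = lim_{ξ→0⁺} h(ξ) and a′/b′ = lim_{ξ→+∞} h(ξ). (This is the content of Eq. (16) (sol2) in Proposition 3: when the proposition p(φ) is false, the optimal squeezing factor is ξ̄(φ) = 0 or ξ̄(φ) = +∞, corresponding to homodyne detection.) -/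

import Mathlib

open Filter

/-- The function `h(ξ) = (−q + (ξ/2)a′ + (1/(2ξ))a) / (p + (ξ/2)b′ + (1/(2ξ))b)`
whose maximization over the squeezing factor `ξ` is equivalent to the maximization of the
teleportation fidelity `F(ξ,φ) = [det Γ^tr − h(ξ)]^(−1/2)`. -/
noncomputable def hfun (p q a a' b b' : ℝ) (ξ : ℝ) : ℝ :=
  (-q + (ξ/2) * a' + (1/(2*ξ)) * a) / (p + (ξ/2) * b' + (1/(2*ξ)) * b)

/-- Eq. (16) (sol2) of Proposition 3: if it is not the case that both `γ < 0` and `γ′ < 0`,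
then the supremum of `h` over `(0,∞)` equals `max (a/b) (a′/b′)`, where
`a/b = lim_{ξ→0⁺} h(ξ)` and `a′/b′ = lim_{ξ→+∞} h(ξ)` (optimal squeezing at the border,
i.e. homodyne detection). -/
theorem sup_hfun_at_border (p q a a' b b' : ℝ)
    (hp : 0 < p) (hb : 0 < b) (hb' : 0 < b')
    (hnot : ¬(p * a + q * b < 0 ∧ p * a' + q * b' < 0)) :
    Tendsto (hfun p q a a' b b') (nhdsWithin 0 (Set.Ioi 0)) (nhds (a / b)) ∧
      Tendsto (hfun p q a a' b b') atTop (nhds (a' / b')) ∧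
      IsLUB (hfun p q a a' b b' '' Set.Ioi 0) (max (a / b) (a' / b')) := by
  set M := max (a / b) (a' / b') with hMdef
  have key : ∀ ξ : ℝ, 0 < ξ → hfun p q a a' b b' ξ
      = (a + ξ^2 * a' - 2*q*ξ) / (b + ξ^2 * b' + 2*p*ξ) := by
    intro ξ hξ
    have hD2 : (0:ℝ) < b + ξ^2 * b' + 2*p*ξ := by positivity
    have hD1 : (0:ℝ) < p + (ξ/2) * b' + (1/(2*ξ)) * b := by positivity
    unfold hfun
    rw [div_eq_div_iff hD1.ne' hD2.ne']
    field_simp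
    ring
  -- limit at 0+
  have hc0 : ContinuousAt (fun ξ : ℝ => (a + ξ^2 * a' - 2*q*ξ) / (b + ξ^2 * b' + 2*p*ξ)) 0 := by
    apply ContinuousAt.div (by fun_prop) (by fun_prop)
    norm_num
    exact hb.ne'
  have h0 : Tendsto (hfun p q a a' b b') (nhdsWithin 0 (Set.Ioi 0)) (nhds (a / b)) := by
    have h1 : Tendsto (fun ξ : ℝ => (a + ξ^2 * a' - 2*q*ξ) / (b + ξ^2 * b' + 2*p*ξ))
        (nhdsWithin 0 (Set.Ioi 0)) (nhds (a / b)) := by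
      have := (hc0.continuousWithinAt (s := Set.Ioi 0)).tendsto
      norm_num at this
      exact this
    apply h1.congr'
    filter_upwards [self_mem_nhdsWithin] with ξ hξ
    exact (key ξ hξ).symm
  -- limit at atTop
  have hcinf : ContinuousAt (fun u : ℝ => (a * u^2 + a' - 2*q*u) / (b * u^2 + b' + 2*p*u)) 0 := by
    apply ContinuousAt.div (by fun_prop) (by fun_prop)
    norm_num
    exact hb'.ne'
  have hinf : Tendsto (hfun p q a a' b b') atTop (nhds (a' / b')) := by
    have h1 : Tendsto (fun ξ : ℝ => (a * (ξ⁻¹)^2 + a' - 2*q*ξ⁻¹) / (b * (ξ⁻¹)^2 + b' + 2*p*ξ⁻¹))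
        atTop (nhds (a' / b')) := by
      have := hcinf.tendsto.comp tendsto_inv_atTop_zero
      norm_num at this
      convert this using 2
      rfl
    apply h1.congr'
    filter_upwards [eventually_gt_atTop (0:ℝ)] with ξ hξ
    rw [key ξ hξ]
    have hD2 : (0:ℝ) < b + ξ^2 * b' + 2*p*ξ := by positivity
    have hD3 : (0:ℝ) < b * (ξ⁻¹)^2 + b' + 2*p*ξ⁻¹ := by positivity
    rw [div_eq_div_iff hD3.ne' hD2.ne']
    field_simp
  -- upper bound facts
  have hab : a ≤ M * b := by
    have h1 : a / b ≤ M := le_max_left _ _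
    have := mul_le_mul_of_nonneg_right h1 hb.le
    rwa [div_mul_cancel₀ _ hb.ne'] at this
  have hab' : a' ≤ M * b' := by
    have h1 : a' / b' ≤ M := le_max_right _ _
    have := mul_le_mul_of_nonneg_right h1 hb'.le
    rwa [div_mul_cancel₀ _ hb'.ne'] at this
  have hqM : 0 ≤ q + M * p := by
    rcases not_and_or.mp hnot with h | h
    · push_neg at h
      nlinarith [mul_le_mul_of_nonneg_left hab hp.le]
    · push_neg at h
      nlinarith [mul_le_mul_of_nonneg_left hab' hp.le]
  have hub : ∀ ξ ∈ Set.Ioi (0:ℝ), hfun p q a a' b b' ξ ≤ M := by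
    intro ξ hξ
    rw [key ξ hξ]
    have hξ' : (0:ℝ) < ξ := hξ
    have hD2 : (0:ℝ) < b + ξ^2 * b' + 2*p*ξ := by positivity
    rw [div_le_iff₀ hD2]
    nlinarith [mul_le_mul_of_nonneg_left hab' (sq_nonneg ξ), mul_nonneg hξ'.le hqM]
  refine ⟨h0, hinf, ?_, ?_⟩
  · rintro y ⟨ξ, hξ, rfl⟩
    exact hub ξ hξ
  · intro u hu
    have hu1 : a / b ≤ u := by
      refine le_of_tendsto h0 ?_
      filter_upwards [self_mem_nhdsWithin] with ξ hξ
      exact hu ⟨ξ, hξ, rfl⟩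
    have hu2 : a' / b' ≤ u := by
      refine le_of_tendsto hinf ?_
      filter_upwards [eventually_gt_atTop (0:ℝ)] with ξ hξ
      exact hu ⟨ξ, hξ, rfl⟩
    exact max_le hu1 hu2
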